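/- arXiv:2511.14200 — 2 statements merged into one kernel-verified Lean document; each statement's English description precedes it below -/
import Mathlib

section
/- Let p ∈ (0,1), q = 1 - p, and let k_0, k_1, ..., k_n be non-negative integers with k_0 = 1 and |k_i − k_{i−1}| = 1 for i = 1, ..., n. If k_i > 0 for all i ≤ n, then P(|U_{n+1}^p| = k_n + 1 | |U_i^p| = k_i, i = 0, ..., n) = (p^{k_n} + q^{k_n}) / (p^{k_n − 1} + q^{k_n − 1}). Moreover, for any such admissible history, this conditional probability equals 1 when k_n = 0 and is at least 1/2 when k_n > 0. -/
/-!
Given the history `|U_0|, …, |U_n| = k_0, …, k_n`, only the sign of `U_n` is unknown. Let `a`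
and `b` be the probabilities of the history together with `U_n = k_n`, resp. `U_n = -k_n`.
Since the next step is independent of the past, an up-step away from `0` maps `(a, b)` to
`(a p, b q)` and a down-step to `(a q, b p)`; at `0` the two cases merge, and leaving `0` the
pair restarts as `(a p, a q)`. Starting from `(1/2, 1/2)` at `k_0 = 1`, this keeps
`(a, b) = c (p^m, q^m)` with `m = k_n - 1` as long as the walk has not visited `0`, and
`m = k_n` afterwards. The conditional probability of moving away from `0` is then
`(a p + b q) / (a + b) = (p^(m+1) + q^(m+1)) / (p^m + q^m)`, which exceeds `1/2` by
`(p - q) (p^m - q^m) / (2 (p^m + q^m)) ≥ 0`.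
-/

open MeasureTheory ProbabilityTheory Finset

noncomputable def stepDist (p : ℝ) : Measure ℝ :=
  ENNReal.ofReal p • Measure.dirac 1 + ENNReal.ofReal (1 - p) • Measure.dirac (-1)

section StepDist

variable {p : ℝ}

lemma stepDist_real_one (hp0 : 0 ≤ p) : (stepDist p).real {1} = p := by
  norm_num [stepDist, measureReal_def, Pi.single_apply, hp0]

lemma stepDist_real_neg_one (hp1 : p ≤ 1) : (stepDist p).real {-1} = 1 - p := by
  norm_num [stepDist, measureReal_def, Pi.single_apply, hp1]

lemma stepDist_real_of_ne {x : ℝ} (h1 : x ≠ 1) (h2 : x ≠ -1) : (stepDist p).real {x} = 0 := by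
  simp [stepDist, measureReal_def, Ne.symm h1, Ne.symm h2]

end StepDist

lemma ProbabilityTheory.cond_eq_ofReal_div {Ω : Type*} [MeasurableSpace Ω] {μ : Measure Ω}
    [IsFiniteMeasure μ] {s : Set Ω} (hs : MeasurableSet s) (hpos : 0 < μ.real s) (t : Set Ω) :
    μ[t | s] = ENNReal.ofReal (μ.real (s ∩ t) / μ.real s) := by
  rw [cond_apply hs, ENNReal.ofReal_div_of_pos hpos, ofReal_measureReal, ofReal_measureReal,
    ENNReal.div_eq_inv_mul]

lemma one_half_le_pow_succ_add_div {p q : ℝ} (hp : 0 < p) (hq : 0 < q) (hpq : p + q = 1)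
    (m : ℕ) : 1 / 2 ≤ (p ^ (m + 1) + q ^ (m + 1)) / (p ^ m + q ^ m) := by
  rw [le_div_iff₀ (by positivity)]
  have hsign : 0 ≤ (p - q) * (p ^ m - q ^ m) := by
    rcases le_total q p with h | h
    · exact mul_nonneg (sub_nonneg.mpr h) (sub_nonneg.mpr (pow_le_pow_left₀ hq.le h m))
    · exact mul_nonneg_of_nonpos_of_nonpos (sub_nonpos.mpr h)
        (sub_nonpos.mpr (pow_le_pow_left₀ hp.le h m))
  have hexcess : p ^ (m + 1) + q ^ (m + 1) - 1 / 2 * (p ^ m + q ^ m) =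
      (p - q) * (p ^ m - q ^ m) / 2 := by
    rw [pow_succ, pow_succ]
    linear_combination (p ^ m + q ^ m) / 2 * hpq
  linarith

lemma setOf_abs_eq_union {α : Type*} {f : α → ℝ} {a : ℝ} (ha : 0 ≤ a) :
    {x | |f x| = a} = {x | f x = a} ∪ {x | f x = -a} := by
  ext x
  exact abs_eq ha

namespace BernoulliWalk

variable {Ω : Type*} {Y : ℕ → Ω → ℝ} {k : ℕ → ℕ} {n : ℕ} {p r x : ℝ}

def walk (Y : ℕ → Ω → ℝ) (n : ℕ) (ω : Ω) : ℝ := ∑ j ∈ range (n + 1), Y j ω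

def history (Y : ℕ → Ω → ℝ) (k : ℕ → ℕ) (n : ℕ) : Set Ω :=
  {ω | ∀ i, i ≤ n → |walk Y i ω| = k i}

lemma walk_succ (ω : Ω) : walk Y (n + 1) ω = walk Y n ω + Y (n + 1) ω :=
  sum_range_succ _ _

lemma history_succ :
    history Y k (n + 1) = history Y k n ∩ {ω | |walk Y (n + 1) ω| = k (n + 1)} := by
  ext ω
  simp only [history, Set.mem_inter_iff, Set.mem_ofPred_eq]
  refine ⟨fun h => ⟨fun i hi => h i (by omega), h _ le_rfl⟩, fun ⟨h, hn⟩ i hi => ?_⟩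
  rcases Nat.lt_or_ge i (n + 1) with hi' | hi'
  · exact h i (by omega)
  · rwa [show i = n + 1 by omega]

lemma history_eq_union :
    history Y k n = (history Y k n ∩ {ω | walk Y n ω = k n}) ∪
      (history Y k n ∩ {ω | walk Y n ω = -k n}) := by
  rw [← Set.inter_union_distrib_left, ← setOf_abs_eq_union (Nat.cast_nonneg _), eq_comm,
    Set.inter_eq_left]
  exact fun ω hω => hω n le_rfl

lemma history_subset_of_eq_zero (hk : k n = 0) : history Y k n ⊆ {ω | walk Y n ω = 0} :=
  fun ω hω => by simpa [hk] using hω n le_rfl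

variable [MeasurableSpace Ω] {μ : Measure Ω}

lemma measurable_walk_natural (hY : ∀ i, StronglyMeasurable (Y i)) {i : ℕ} (hi : i ≤ n) :
    Measurable[Filtration.natural Y hY n] (walk Y i) := by
  refine Finset.measurable_sum _ fun j hj => ?_
  have hjn : j ≤ n := (Nat.lt_succ_iff.mp (mem_range.mp hj)).trans hi
  exact ((Filtration.stronglyAdapted_natural hY j).mono (Filtration.mono _ hjn)).measurable

lemma measurableSet_history_natural (hY : ∀ i, StronglyMeasurable (Y i)) :
    MeasurableSet[Filtration.natural Y hY n] (history Y k n) := by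
  simp only [history, Set.ofPred_forall]
  exact .iInter (m := Filtration.natural Y hY n) fun i =>
    .iInter (m := Filtration.natural Y hY n) fun hi =>
      (measurable_abs.comp (measurable_walk_natural hY hi)) (measurableSet_singleton _)

lemma measurableSet_history_inter_natural (hY : ∀ i, StronglyMeasurable (Y i)) (x : ℝ) :
    MeasurableSet[Filtration.natural Y hY n] (history Y k n ∩ {ω | walk Y n ω = x}) :=
  (measurableSet_history_natural hY).inter
    (measurable_walk_natural hY le_rfl (measurableSet_singleton x))

lemma measurableSet_history (hY : ∀ i, StronglyMeasurable (Y i)) :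
    MeasurableSet (history Y k n) :=
  (Filtration.natural Y hY).le n _ (measurableSet_history_natural hY)

lemma measurableSet_walk_eq (hY : ∀ i, StronglyMeasurable (Y i)) (x : ℝ) :
    MeasurableSet {ω | walk Y n ω = x} :=
  (Filtration.natural Y hY).le n _ (measurable_walk_natural hY le_rfl (measurableSet_singleton x))

lemma measureReal_inter_walk_succ (hY : ∀ i, StronglyMeasurable (Y i)) (hindep : iIndepFun Y μ)
    {S : Set Ω} (hS : MeasurableSet[Filtration.natural Y hY n] S)
    (hSx : S ⊆ {ω | walk Y n ω = x}) (r : ℝ) :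
    μ.real (S ∩ {ω | walk Y (n + 1) ω = r}) =
      μ.real S * (μ.map (Y (n + 1))).real {r - x} := by
  have hS_inter : S ∩ {ω | walk Y (n + 1) ω = r} = S ∩ Y (n + 1) ⁻¹' {r - x} := by
    ext ω
    simp only [Set.mem_inter_iff, Set.mem_ofPred_eq, Set.mem_preimage, Set.mem_singleton_iff,
      walk_succ]
    refine and_congr_right fun hω => ?_
    rw [show walk Y n ω = x from hSx hω]
    constructor <;> intro h <;> linarith
  have hindep_set : IndepSet S (Y (n + 1) ⁻¹' {r - x}) μ :=
    (hindep.indep_comap_natural_of_lt hY n.lt_succ_self).symm.indepSet_of_measurableSet hS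
      ⟨_, measurableSet_singleton _, rfl⟩
  rw [hS_inter, map_measureReal_apply (hY _).measurable (measurableSet_singleton _),
    measureReal_def, hindep_set.measure_inter_eq_mul, ENNReal.toReal_mul, measureReal_def,
    measureReal_def]

def pathMass (μ : Measure Ω) (Y : ℕ → Ω → ℝ) (k : ℕ → ℕ) (n : ℕ) (x : ℝ) :
    ℝ :=
  μ.real (history Y k n ∩ {ω | walk Y n ω = x})

lemma pathMass_zero (hx : |x| = k 0) : pathMass μ Y k 0 x = μ.real (Y 0 ⁻¹' {x}) := by
  rw [pathMass]
  congr 1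
  ext ω
  simp only [history, walk, Nat.le_zero, forall_eq, zero_add, sum_range_one,
    Set.mem_inter_iff, Set.mem_ofPred_eq, Set.mem_preimage, Set.mem_singleton_iff]
  exact ⟨fun h => h.2, fun h => ⟨h ▸ hx, h⟩⟩

lemma pathMass_succ (hr : |r| = k (n + 1)) :
    pathMass μ Y k (n + 1) r = μ.real (history Y k n ∩ {ω | walk Y (n + 1) ω = r}) := by
  rw [pathMass, history_succ, Set.inter_assoc]
  congr 2
  ext ω
  simp only [Set.mem_inter_iff, Set.mem_ofPred_eq]
  exact ⟨fun h => h.2, fun h => ⟨h ▸ hr, h⟩⟩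

lemma pathMass_of_eq_zero (hk : k n = 0) : pathMass μ Y k n (k n) = μ.real (history Y k n) := by
  rw [pathMass, hk, Nat.cast_zero, Set.inter_eq_left.mpr (history_subset_of_eq_zero hk)]

lemma measureReal_history_inter_walk_succ_of_eq_zero (hY : ∀ i, StronglyMeasurable (Y i))
    (hindep : iIndepFun Y μ) (hk : k n = 0) (r : ℝ) :
    μ.real (history Y k n ∩ {ω | walk Y (n + 1) ω = r}) =
      μ.real (history Y k n) * (μ.map (Y (n + 1))).real {r} := by
  simpa using measureReal_inter_walk_succ hY hindep (measurableSet_history_natural hY)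
    (history_subset_of_eq_zero hk) r

lemma measureReal_history_inter_of_pos [IsFiniteMeasure μ] (hY : ∀ i, StronglyMeasurable (Y i))
    (hk : 0 < k n) {E : Set Ω} (hE : MeasurableSet E) :
    μ.real (history Y k n ∩ E) = μ.real (history Y k n ∩ {ω | walk Y n ω = k n} ∩ E) +
      μ.real (history Y k n ∩ {ω | walk Y n ω = -k n} ∩ E) := by
  have hkR : (0 : ℝ) < k n := by exact_mod_cast hk
  conv_lhs => rw [history_eq_union, Set.union_inter_distrib_right]
  refine measureReal_union ?_ ?_
  · refine Set.disjoint_left.mpr fun ω h₁ h₂ => ?_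
    have : (k n : ℝ) = -k n := h₁.1.2.symm.trans h₂.1.2
    linarith
  · exact ((Filtration.natural Y hY).le n _ (measurableSet_history_inter_natural hY _)).inter hE

lemma measureReal_history_of_pos [IsFiniteMeasure μ] (hY : ∀ i, StronglyMeasurable (Y i))
    (hk : 0 < k n) :
    μ.real (history Y k n) = pathMass μ Y k n (k n) + pathMass μ Y k n (-k n) := by
  simpa [pathMass] using measureReal_history_inter_of_pos (μ := μ) hY hk MeasurableSet.univ

lemma measureReal_history_inter_walk_succ_of_pos [IsFiniteMeasure μ]
    (hY : ∀ i, StronglyMeasurable (Y i)) (hindep : iIndepFun Y μ) (hk : 0 < k n) (r : ℝ) :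
    μ.real (history Y k n ∩ {ω | walk Y (n + 1) ω = r}) =
      pathMass μ Y k n (k n) * (μ.map (Y (n + 1))).real {r - k n} +
        pathMass μ Y k n (-k n) * (μ.map (Y (n + 1))).real {r + k n} := by
  rw [measureReal_history_inter_of_pos hY hk (measurableSet_walk_eq hY r),
    measureReal_inter_walk_succ hY hindep (measurableSet_history_inter_natural hY _)
      Set.inter_subset_right,
    measureReal_inter_walk_succ hY hindep (measurableSet_history_inter_natural hY _)
      Set.inter_subset_right, sub_neg_eq_add, pathMass, pathMass]

lemma measureReal_history_inter_abs_walk_succ [IsFiniteMeasure μ]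
    (hY : ∀ i, StronglyMeasurable (Y i)) :
    μ.real (history Y k n ∩ {ω | |walk Y (n + 1) ω| = k n + 1}) =
      μ.real (history Y k n ∩ {ω | walk Y (n + 1) ω = k n + 1}) +
        μ.real (history Y k n ∩ {ω | walk Y (n + 1) ω = -(k n + 1)}) := by
  rw [setOf_abs_eq_union (by positivity), Set.inter_union_distrib_left]
  refine measureReal_union ?_ ((measurableSet_history hY).inter (measurableSet_walk_eq hY _))
  refine Set.disjoint_left.mpr fun ω h₁ h₂ => ?_
  have : (k n : ℝ) + 1 = -(k n + 1) := h₁.2.symm.trans h₂.2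
  linarith

lemma pathMass_succ_of_eq_zero (hY : ∀ i, StronglyMeasurable (Y i)) (hindep : iIndepFun Y μ)
    (hYstep : μ.map (Y (n + 1)) = stepDist p) (hk : k n = 0) (hr : |r| = k (n + 1)) :
    pathMass μ Y k (n + 1) r = pathMass μ Y k n (k n) * (stepDist p).real {r} := by
  rw [pathMass_succ hr, measureReal_history_inter_walk_succ_of_eq_zero hY hindep hk, hYstep,
    pathMass_of_eq_zero hk]

lemma pathMass_succ_of_pos [IsFiniteMeasure μ] (hY : ∀ i, StronglyMeasurable (Y i))
    (hindep : iIndepFun Y μ) (hYstep : μ.map (Y (n + 1)) = stepDist p) (hk : 0 < k n)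
    (hr : |r| = k (n + 1)) :
    pathMass μ Y k (n + 1) r = pathMass μ Y k n (k n) * (stepDist p).real {r - k n} +
      pathMass μ Y k n (-k n) * (stepDist p).real {r + k n} := by
  rw [pathMass_succ hr, measureReal_history_inter_walk_succ_of_pos hY hindep hk, hYstep]

lemma pathMass_succ_of_pos_of_pos [IsFiniteMeasure μ] (hY : ∀ i, StronglyMeasurable (Y i))
    (hindep : iIndepFun Y μ) (hYstep : μ.map (Y (n + 1)) = stepDist p) (hk : 0 < k n)
    (hk' : 0 < k (n + 1)) :
    pathMass μ Y k (n + 1) (k (n + 1)) =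
        pathMass μ Y k n (k n) * (stepDist p).real {(k (n + 1) : ℝ) - k n} ∧
      pathMass μ Y k (n + 1) (-k (n + 1)) =
        pathMass μ Y k n (-k n) * (stepDist p).real {(k n : ℝ) - k (n + 1)} := by
  have h₁ : (1 : ℝ) ≤ k n := by exact_mod_cast hk
  have h₂ : (1 : ℝ) ≤ k (n + 1) := by exact_mod_cast hk'
  constructor
  · rw [pathMass_succ_of_pos hY hindep hYstep hk (abs_of_nonneg (Nat.cast_nonneg _)),
      stepDist_real_of_ne (x := (k (n + 1) : ℝ) + k n) (by linarith) (by linarith),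
      mul_zero, add_zero]
  · rw [pathMass_succ_of_pos hY hindep hYstep hk
        (by rw [abs_neg, abs_of_nonneg (Nat.cast_nonneg _)]),
      stepDist_real_of_ne (x := -(k (n + 1) : ℝ) - k n) (by linarith) (by linarith),
      mul_zero, zero_add, neg_add_eq_sub]

def HasGeometricPathMasses (μ : Measure Ω) (Y : ℕ → Ω → ℝ) (k : ℕ → ℕ) (p : ℝ)
    (n : ℕ) : Prop :=
  ∃ c > 0, ∃ m, k n ≤ m + 1 ∧ ((∀ i ≤ n, 0 < k i) → m + 1 = k n) ∧
    pathMass μ Y k n (k n) = c * p ^ m ∧ pathMass μ Y k n (-k n) = c * (1 - p) ^ m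

lemma hasGeometricPathMasses_zero (hY : ∀ i, StronglyMeasurable (Y i))
    (hY0 : μ.map (Y 0) = stepDist (1 / 2)) (hk0 : k 0 = 1) :
    HasGeometricPathMasses μ Y k p 0 := by
  refine ⟨1 / 2, by norm_num, 0, by omega, fun _ => hk0.symm, ?_, ?_⟩
  · rw [pathMass_zero (abs_of_nonneg (Nat.cast_nonneg _)),
      ← map_measureReal_apply (hY 0).measurable (measurableSet_singleton _), hY0, hk0,
      Nat.cast_one, stepDist_real_one (by norm_num)]
    ring
  · rw [pathMass_zero (by simp),
      ← map_measureReal_apply (hY 0).measurable (measurableSet_singleton _), hY0, hk0,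
      Nat.cast_one, stepDist_real_neg_one (by norm_num)]
    ring

lemma hasGeometricPathMasses_succ_of_eq_zero (hp0 : 0 ≤ p) (hp1 : p ≤ 1)
    (hY : ∀ i, StronglyMeasurable (Y i)) (hindep : iIndepFun Y μ)
    (hYstep : μ.map (Y (n + 1)) = stepDist p) (hk : k n = 0) (hk' : k (n + 1) = 1)
    (hpos : 0 < pathMass μ Y k n (k n)) : HasGeometricPathMasses μ Y k p (n + 1) := by
  refine ⟨pathMass μ Y k n (k n), hpos, 1, by omega,
    fun h => absurd (h n n.le_succ) (by omega), ?_, ?_⟩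
  · rw [hk', Nat.cast_one, pathMass_succ_of_eq_zero hY hindep hYstep hk (by simp [hk']),
      stepDist_real_one hp0, pow_one]
  · rw [hk', Nat.cast_one, pathMass_succ_of_eq_zero hY hindep hYstep hk (by simp [hk']),
      stepDist_real_neg_one hp1, pow_one]

lemma HasGeometricPathMasses.succ [IsFiniteMeasure μ] (hp0 : 0 < p) (hp1 : p < 1)
    (hY : ∀ i, StronglyMeasurable (Y i)) (hindep : iIndepFun Y μ)
    (hYstep : μ.map (Y (n + 1)) = stepDist p) (hstep : |(k (n + 1) : ℤ) - k n| = 1)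
    (h : HasGeometricPathMasses μ Y k p n) : HasGeometricPathMasses μ Y k p (n + 1) := by
  obtain ⟨c, hc, m, hm, hm_pos, ha, hb⟩ := h
  have hstep' : k (n + 1) = k n + 1 ∨ k n = k (n + 1) + 1 := by
    rw [abs_eq zero_le_one] at hstep
    omega
  have hpos_of_succ : (∀ i ≤ n + 1, 0 < k i) → m + 1 = k n :=
    fun h => hm_pos fun i hi => h i (by omega)
  rcases Nat.eq_zero_or_pos (k n) with hk | hk
  · exact hasGeometricPathMasses_succ_of_eq_zero hp0.le hp1.le hY hindep hYstep hk (by omega)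
      (by rw [ha]; positivity)
  rcases Nat.eq_zero_or_pos (k (n + 1)) with hk' | hk'
  · have hkn : k n = 1 := by omega
    have hzero : pathMass μ Y k (n + 1) 0 = c * p ^ m * (1 - p) + c * (1 - p) ^ m * p := by
      rw [pathMass_succ_of_pos hY hindep hYstep hk (by simp [hk']), ← ha, ← hb, hkn]
      norm_num [stepDist_real_one hp0.le, stepDist_real_neg_one hp1.le]
    refine ⟨c * p ^ m * (1 - p) + c * (1 - p) ^ m * p, by positivity, 0, by omega,
      fun h => absurd (h (n + 1) le_rfl) (by omega), ?_, ?_⟩ <;> simp [hk', hzero]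
  obtain ⟨ha', hb'⟩ := pathMass_succ_of_pos_of_pos hY hindep hYstep hk hk'
  rcases hstep' with hup | hdown
  · refine ⟨c, hc, m + 1, by omega, fun h => by have := hpos_of_succ h; omega, ?_, ?_⟩
    · rw [ha', ha, hup, Nat.cast_succ, add_sub_cancel_left, stepDist_real_one hp0.le]
      ring
    · rw [hb', hb, hup, Nat.cast_succ, sub_add_cancel_left, stepDist_real_neg_one hp1.le]
      ring
  · obtain ⟨m', rfl⟩ : ∃ m', m = m' + 1 := ⟨m - 1, by omega⟩
    refine ⟨c * p * (1 - p), by positivity, m', by omega,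
      fun h => by have := hpos_of_succ h; omega, ?_, ?_⟩
    · rw [ha', ha, hdown, Nat.cast_succ, sub_add_cancel_left, stepDist_real_neg_one hp1.le]
      ring
    · rw [hb', hb, hdown, Nat.cast_succ, add_sub_cancel_left, stepDist_real_one hp0.le]
      ring

lemma hasGeometricPathMasses [IsFiniteMeasure μ] (hp0 : 0 < p) (hp1 : p < 1)
    (hY : ∀ i, StronglyMeasurable (Y i)) (hindep : iIndepFun Y μ)
    (hY0 : μ.map (Y 0) = stepDist (1 / 2)) (hYstep : ∀ i, μ.map (Y (i + 1)) = stepDist p)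
    (hk0 : k 0 = 1) (hkstep : ∀ i, 1 ≤ i → i ≤ n → |(k i : ℤ) - k (i - 1)| = 1) :
    HasGeometricPathMasses μ Y k p n := by
  induction n with
  | zero => exact hasGeometricPathMasses_zero hY hY0 hk0
  | succ n ih =>
    exact (ih fun i hi hin => hkstep i hi (by omega)).succ hp0 hp1 hY hindep (hYstep n)
      (hkstep (n + 1) (by omega) le_rfl)

lemma cond_history_of_eq_zero [IsFiniteMeasure μ] (hY : ∀ i, StronglyMeasurable (Y i))
    (hindep : iIndepFun Y μ) (hYstep : μ.map (Y (n + 1)) = stepDist p) (hp0 : 0 ≤ p)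
    (hp1 : p ≤ 1) (hk : k n = 0) (hpos : 0 < μ.real (history Y k n)) :
    μ[{ω | |walk Y (n + 1) ω| = k n + 1} | history Y k n] = 1 := by
  rw [cond_eq_ofReal_div (measurableSet_history hY) hpos,
    measureReal_history_inter_abs_walk_succ hY,
    measureReal_history_inter_walk_succ_of_eq_zero hY hindep hk,
    measureReal_history_inter_walk_succ_of_eq_zero hY hindep hk, hYstep, hk, Nat.cast_zero,
    zero_add, stepDist_real_one hp0, stepDist_real_neg_one hp1, ← mul_add, add_sub_cancel,
    mul_one, div_self hpos.ne', ENNReal.ofReal_one]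

lemma cond_history_of_pos [IsFiniteMeasure μ] (hY : ∀ i, StronglyMeasurable (Y i))
    (hindep : iIndepFun Y μ) (hYstep : μ.map (Y (n + 1)) = stepDist p) (hp0 : 0 < p)
    (hp1 : p < 1) (hk : 0 < k n) {c : ℝ} (hc : 0 < c) {m : ℕ}
    (ha : pathMass μ Y k n (k n) = c * p ^ m) (hb : pathMass μ Y k n (-k n) = c * (1 - p) ^ m) :
    μ[{ω | |walk Y (n + 1) ω| = k n + 1} | history Y k n] =
      ENNReal.ofReal ((p ^ (m + 1) + (1 - p) ^ (m + 1)) / (p ^ m + (1 - p) ^ m)) := by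
  have h₁ : (1 : ℝ) ≤ k n := by exact_mod_cast hk
  have hmass := measureReal_history_of_pos (μ := μ) hY hk
  rw [ha, hb] at hmass
  have e₁ : (k n : ℝ) + 1 - k n = 1 := by ring
  have e₂ : -((k n : ℝ) + 1) + k n = -1 := by ring
  rw [cond_eq_ofReal_div (measurableSet_history hY) (by rw [hmass]; positivity),
    measureReal_history_inter_abs_walk_succ hY,
    measureReal_history_inter_walk_succ_of_pos hY hindep hk,
    measureReal_history_inter_walk_succ_of_pos hY hindep hk, hYstep, ha, hb, hmass, e₁, e₂,
    stepDist_real_one hp0.le, stepDist_real_neg_one hp1.le,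
    stepDist_real_of_ne (x := (k n : ℝ) + 1 + k n) (by linarith) (by linarith),
    stepDist_real_of_ne (x := -((k n : ℝ) + 1) - k n) (by linarith) (by linarith)]
  congr 1
  have : 0 < 1 - p := by linarith
  field_simp
  ring

end BernoulliWalk

open BernoulliWalk in
/-- Conditional-probability computation for the walk `U^p_n = X_0 + S^p_n` (modelled by
`Y 0 = X_0 ~ stepDist (1/2)` and increments `Y (i+1) ~ stepDist p`, all independent, so that
`U^p_n = ∑_{i ≤ n} Y i`).  Let `p ∈ (0,1)`, `q = 1 - p`, and let `k_0, …, k_n` be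
non-negative integers with `k_0 = 1` and `|k_i − k_{i−1}| = 1` for `i = 1, …, n`.  If
`k_i > 0` for all `i ≤ n`, then
`P(|U_{n+1}| = k_n + 1 ∣ |U_i| = k_i, i = 0,…,n) = (p^{k_n} + q^{k_n})/(p^{k_n−1} + q^{k_n−1})`.
Moreover, for any such admissible history, this conditional probability equals `1` when
`k_n = 0` and is at least `1/2` when `k_n > 0`. -/
theorem initial_state_walk_conditional_transition_probability
    {Ω : Type*} [MeasurableSpace Ω] (μ : Measure Ω) [IsProbabilityMeasure μ]
    (p : ℝ) (hp0 : 0 < p) (hp1 : p < 1)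
    (Y : ℕ → Ω → ℝ)
    (hYmeas : ∀ i, Measurable (Y i))
    (hYindep : iIndepFun Y μ)
    (hY0dist : Measure.map (Y 0) μ = stepDist (1/2))
    (hYdist : ∀ i, Measure.map (Y (i + 1)) μ = stepDist p)
    (n : ℕ) (k : ℕ → ℕ) (hk0 : k 0 = 1)
    (hkstep : ∀ i, 1 ≤ i → i ≤ n → |(k i : ℤ) - (k (i - 1) : ℤ)| = 1) :
    ((∀ i, i ≤ n → 0 < k i) →
      ProbabilityTheory.cond μ
          {ω | ∀ i, i ≤ n → |∑ j ∈ Finset.range (i + 1), Y j ω| = (k i : ℝ)}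
          {ω | |∑ j ∈ Finset.range (n + 2), Y j ω| = (k n : ℝ) + 1}
        = ENNReal.ofReal
            ((p ^ (k n) + (1 - p) ^ (k n)) / (p ^ (k n - 1) + (1 - p) ^ (k n - 1)))) ∧
    (k n = 0 →
      ProbabilityTheory.cond μ
          {ω | ∀ i, i ≤ n → |∑ j ∈ Finset.range (i + 1), Y j ω| = (k i : ℝ)}
          {ω | |∑ j ∈ Finset.range (n + 2), Y j ω| = (k n : ℝ) + 1} = 1) ∧
    (0 < k n →
      ENNReal.ofReal (1/2) ≤
        ProbabilityTheory.cond μ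
          {ω | ∀ i, i ≤ n → |∑ j ∈ Finset.range (i + 1), Y j ω| = (k i : ℝ)}
          {ω | |∑ j ∈ Finset.range (n + 2), Y j ω| = (k n : ℝ) + 1}) := by
  have hY : ∀ i, StronglyMeasurable (Y i) := fun i => (hYmeas i).stronglyMeasurable
  obtain ⟨c, hc, m, -, hm, ha, hb⟩ :=
    hasGeometricPathMasses hp0 hp1 hY hYindep hY0dist hYdist hk0 hkstep
  rcases Nat.eq_zero_or_pos (k n) with hk | hk
  · have hone := cond_history_of_eq_zero hY hYindep (hYdist n) hp0.le hp1.le hk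
      (by rw [← pathMass_of_eq_zero hk, ha]; positivity)
    exact ⟨fun h => absurd (h n le_rfl) (by omega), fun _ => hone, fun h => absurd h (by omega)⟩
  · have hratio := cond_history_of_pos hY hYindep (hYdist n) hp0 hp1 hk hc ha hb
    refine ⟨fun hpos => hratio.trans ?_, fun h => absurd h (by omega), fun _ => ?_⟩
    · rw [← hm hpos, Nat.add_sub_cancel]
    · exact (ENNReal.ofReal_le_ofReal
        (one_half_le_pow_succ_add_div hp0 (by linarith) (by ring) m)).trans_eq hratio.symm
end

section
/- Let p ∈ (0,1), q = 1 - p, and let k_0, k_1, ..., k_n be odd positive integers with k_0 = 1 and, for each i, k_{i+1} − k_i ∈ {0, 2} if k_i = 1 and k_{i+1} − k_i ∈ {−2, 2} otherwise. Then: (i) if (k_n − 1)/2 and n have the same parity, P(|V_{n+1}^p| = k_n + 2 | |V_i^p| = k_i, i = 0, ..., n) = (p^{(k_n+1)/2} + q^{(k_n+1)/2}) / (p^{(k_n−1)/2} + q^{(k_n−1)/2}); (ii) if (k_n − 1)/2 and n have opposite parity, this conditional probability equals (p^{(k_n+3)/2} + q^{(k_n+3)/2}) / (p^{(k_n+1)/2}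 + q^{(k_n+1)/2}). In particular, the conditional probability depends on the history only through k_n and n, so (|V_n^p|)_{n≥0} is a (non-homogeneous) Markov chain. -/
open MeasureTheory ProbabilityTheory Finset

/-!
A walk with steps `±2` started at `±1` never vanishes, so the history `|V_i| = k_i` (`i ≤ n`)
determines `(V_0, …, V_n)` up to a global sign, and the step condition on `k` makes such a path `y`
exist; we choose it with `V_n = k_n > 0`. Up to a null set the conditioning event is the disjoint
union of the cylinders `{X = y}` and `{X = -y}`, of probabilities `p^u q^d / 2` and `q^u p^d / 2`,
where `u` and `d` count the up and down steps of `y`; the event `|V_{n+1}| = k_n + 2` adds one step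
away from `0` to each. Cancelling `(pq)^d` leaves `(p^{j+1} + q^{j+1}) / (p^j + q^j)` with
`j = u - d`, and `k_n = y_0 + 2 (u - d)` gives `j = (k_n ∓ 1)/2` for `y_0 = ±1`; as
`n = u + d ≡ j (mod 2)`, the parity condition tells the two cases apart.
-/

lemma stepDist_singleton (r : ℝ) {x : ℝ} (hx : x = 1 ∨ x = -1) :
    stepDist r {x} = ENNReal.ofReal (if x = 1 then r else 1 - r) := by
  rcases hx with rfl | rfl <;>
    simp [stepDist, Measure.dirac_apply' _ (measurableSet_singleton _), Set.indicator] <;> norm_num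

lemma ae_stepDist_eq_one_or_eq_neg_one (r : ℝ) : ∀ᵐ x ∂stepDist r, x = 1 ∨ x = -1 := by
  have hm : MeasurableSet {x : ℝ | x = 1 ∨ x = -1} :=
    (measurableSet_singleton 1).union (measurableSet_singleton (-1))
  simp only [stepDist, ae_add_measure_iff]
  exact ⟨Measure.ae_smul_measure ((ae_dirac_iff hm).mpr (Or.inl rfl)) _,
    Measure.ae_smul_measure ((ae_dirac_iff hm).mpr (Or.inr rfl)) _⟩

def doubledWalk (y : ℕ → ℝ) (i : ℕ) : ℝ := y 0 + 2 * ∑ j ∈ range i, y (j + 1)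

def IsSignPath (y : ℕ → ℝ) (N : ℕ) : Prop := ∀ j ≤ N, y j = 1 ∨ y j = -1

section DoubledWalk

variable {y z : ℕ → ℝ} {n : ℕ}

lemma IsSignPath.mono {m : ℕ} (hy : IsSignPath y n) (h : m ≤ n) : IsSignPath y m :=
  fun j hj => hy j (hj.trans h)

lemma IsSignPath.neg (hy : IsSignPath y n) : IsSignPath (-y) n :=
  fun j hj => by rcases hy j hj with h | h <;> simp [h]

lemma IsSignPath.update_succ (hy : IsSignPath y n) {e : ℝ} (he : e = 1 ∨ e = -1) :
    IsSignPath (Function.update y (n + 1) e) (n + 1) := fun j hj => by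
  rcases eq_or_ne j (n + 1) with rfl | hj'
  · simpa using he
  · simpa [hj'] using hy j (by omega)

@[simp] lemma doubledWalk_zero : doubledWalk y 0 = y 0 := by simp [doubledWalk]

lemma doubledWalk_succ (i : ℕ) : doubledWalk y (i + 1) = doubledWalk y i + 2 * y (i + 1) := by
  simp only [doubledWalk, sum_range_succ]; ring

lemma doubledWalk_neg (i : ℕ) : doubledWalk (-y) i = -doubledWalk y i := by
  simp only [doubledWalk, Pi.neg_apply, sum_neg_distrib]; ring

lemma doubledWalk_congr {i : ℕ} (h : ∀ j ≤ i, y j = z j) : doubledWalk y i = doubledWalk z i := by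
  unfold doubledWalk
  rw [h 0 i.zero_le, sum_congr rfl fun j hj => h (j + 1) (by simpa using hj)]

lemma doubledWalk_update_of_le {i : ℕ} (hi : i ≤ n) (e : ℝ) :
    doubledWalk (Function.update y (n + 1) e) i = doubledWalk y i :=
  doubledWalk_congr fun _ hj => Function.update_of_ne (by omega) _ _

lemma doubledWalk_update_succ (e : ℝ) :
    doubledWalk (Function.update y (n + 1) e) (n + 1) = doubledWalk y n + 2 * e := by
  rw [doubledWalk_succ, doubledWalk_update_of_le le_rfl, Function.update_self]

lemma doubledWalk_eq_card (hy : IsSignPath y n) :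
    doubledWalk y n =
      y 0 + 2 * ((#{j ∈ range n | y (j + 1) = 1} : ℝ) - #{j ∈ range n | ¬y (j + 1) = 1}) := by
  have hsum : ∑ j ∈ range n, y (j + 1) = ∑ j ∈ range n, if y (j + 1) = 1 then 1 else -1 :=
    sum_congr rfl fun j hj => by
      rcases hy (j + 1) (by simp at hj; omega) with h | h <;> simp [h]
  rw [doubledWalk, hsum, sum_ite]
  simp [sub_eq_add_neg]

lemma doubledWalk_ne_zero (hy : IsSignPath y n) : doubledWalk y n ≠ 0 := by
  rw [doubledWalk_eq_card hy]
  intro h0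
  rcases hy 0 n.zero_le with h | h <;> rw [h] at h0 <;> norm_cast at h0 <;> omega

lemma eq_of_abs_add_two_mul_eq {w a b : ℝ} (hw : w ≠ 0) (ha : a = 1 ∨ a = -1)
    (hb : b = 1 ∨ b = -1) (h : |w + 2 * a| = |w + 2 * b|) : a = b := by
  have ha2 : a ^ 2 = 1 := by rcases ha with rfl | rfl <;> norm_num
  have hb2 : b ^ 2 = 1 := by rcases hb with rfl | rfl <;> norm_num
  have hsq : (w + 2 * a) ^ 2 = (w + 2 * b) ^ 2 := by rw [← sq_abs, h, sq_abs]
  have : w * (a - b) = 0 := by linear_combination hsq / 4 - ha2 + hb2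
  exact sub_eq_zero.mp ((mul_eq_zero.mp this).resolve_left hw)

theorem eq_or_eq_neg_of_abs_doubledWalk_eq (hy : IsSignPath y n) (hz : IsSignPath z n)
    (h : ∀ i ≤ n, |doubledWalk z i| = |doubledWalk y i|) :
    (∀ j ≤ n, z j = y j) ∨ ∀ j ≤ n, z j = -y j := by
  induction n with
  | zero => simpa [Nat.le_zero, abs_eq_abs] using h 0 le_rfl
  | succ n ih =>
    have hw : doubledWalk y n ≠ 0 := doubledWalk_ne_zero (hy.mono n.le_succ)
    have hlast := h (n + 1) le_rfl
    rw [doubledWalk_succ, doubledWalk_succ] at hlast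
    rcases ih (hy.mono n.le_succ) (hz.mono n.le_succ) (fun i hi => h i (by omega)) with hzy | hzy
    · have hnext := eq_of_abs_add_two_mul_eq hw (hz _ le_rfl) (hy _ le_rfl)
        (by rwa [doubledWalk_congr hzy] at hlast)
      refine .inl fun j hj => ?_
      rcases Nat.lt_or_eq_of_le hj with hj | rfl
      exacts [hzy j (by omega), hnext]
    · rw [doubledWalk_congr (z := -y) hzy, doubledWalk_neg, ← abs_neg] at hlast
      have hnext : -z (n + 1) = y (n + 1) :=
        eq_of_abs_add_two_mul_eq hw ((hz.neg) _ le_rfl) (hy _ le_rfl)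
          (by convert hlast using 2; ring)
      refine .inr fun j hj => ?_
      rcases Nat.lt_or_eq_of_le hj with hj | rfl
      exacts [hzy j (by omega), by linarith]

end DoubledWalk

def IsAbsWalkStep (a b : ℕ) : Prop :=
  (a = 1 → (b = 1 ∨ b = 3)) ∧ (a ≠ 1 → ((b : ℤ) = (a : ℤ) - 2 ∨ (b : ℤ) = (a : ℤ) + 2))

lemma exists_sign_abs_add_two_mul_eq {w : ℝ} {a b : ℕ} (hw : |w| = a) (hab : IsAbsWalkStep a b) :
    ∃ e : ℝ, (e = 1 ∨ e = -1) ∧ |w + 2 * e| = b := by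
  suffices ∃ e : ℝ, (e = 1 ∨ e = -1) ∧ |(a : ℝ) + 2 * e| = b by
    obtain ⟨e, he, hae⟩ := this
    rcases (abs_eq (Nat.cast_nonneg a)).mp hw with rfl | rfl
    · exact ⟨e, he, hae⟩
    · refine ⟨-e, by rcases he with rfl | rfl <;> norm_num, ?_⟩
      rw [← hae, ← abs_neg]; congr 1; ring
  by_cases hb : (b : ℤ) = a + 2
  · refine ⟨1, .inl rfl, ?_⟩
    have : (b : ℝ) = a + 2 := by exact_mod_cast hb
    rw [this, abs_of_nonneg (by positivity)]; ring
  · refine ⟨-1, .inr rfl, ?_⟩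
    by_cases ha : a = 1
    · obtain rfl : b = 1 := by have := hab.1 ha; omega
      subst ha; norm_num
    · have : (b : ℝ) = a - 2 := by exact_mod_cast (hab.2 ha).resolve_right hb
      rw [this, abs_of_nonneg (by linarith [b.cast_nonneg (α := ℝ)])]
      ring

section History

variable {k : ℕ → ℕ} {n : ℕ}

theorem exists_signPath_abs_doubledWalk_eq (hk0 : k 0 = 1)
    (hk : ∀ i, i + 1 ≤ n → IsAbsWalkStep (k i) (k (i + 1))) :
    ∃ y : ℕ → ℝ, IsSignPath y n ∧ ∀ i ≤ n, |doubledWalk y i| = k i := by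
  induction n with
  | zero => exact ⟨fun _ => 1, fun _ _ => .inl rfl, fun i hi => by simp [Nat.le_zero.mp hi, hk0]⟩
  | succ n ih =>
    obtain ⟨y, hy, hyk⟩ := ih fun i hi => hk i (by omega)
    obtain ⟨e, he, hek⟩ := exists_sign_abs_add_two_mul_eq (hyk n le_rfl) (hk n le_rfl)
    refine ⟨Function.update y (n + 1) e, hy.update_succ he, fun i hi => ?_⟩
    rcases Nat.lt_or_eq_of_le hi with hi | rfl
    · rw [doubledWalk_update_of_le (by omega), hyk i (by omega)]
    · rw [doubledWalk_update_succ, hek]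

theorem exists_signPath_doubledWalk_eq (hk0 : k 0 = 1)
    (hk : ∀ i, i + 1 ≤ n → IsAbsWalkStep (k i) (k (i + 1))) :
    ∃ y : ℕ → ℝ, IsSignPath y n ∧ (∀ i ≤ n, |doubledWalk y i| = k i) ∧ doubledWalk y n = k n := by
  obtain ⟨y, hy, hyk⟩ := exists_signPath_abs_doubledWalk_eq hk0 hk
  rcases le_or_gt 0 (doubledWalk y n) with hn | hn
  · exact ⟨y, hy, hyk, by rw [← hyk n le_rfl, abs_of_nonneg hn]⟩
  · refine ⟨-y, hy.neg, fun i hi => ?_, ?_⟩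
    · rw [doubledWalk_neg, abs_neg, hyk i hi]
    · rw [doubledWalk_neg, ← hyk n le_rfl, abs_of_neg hn]

end History

noncomputable def pathWeight (r : ℝ) (y : ℕ → ℝ) (n : ℕ) : ℝ :=
  ∏ j ∈ range n, if y (j + 1) = 1 then r else 1 - r

section PathWeight

variable {r : ℝ} {y : ℕ → ℝ} {n : ℕ}

lemma pathWeight_eq_pow_mul_pow :
    pathWeight r y n =
      r ^ #{j ∈ range n | y (j + 1) = 1} * (1 - r) ^ #{j ∈ range n | ¬y (j + 1) = 1} := by
  rw [pathWeight, prod_ite, prod_const, prod_const]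

lemma pathWeight_neg (hy : IsSignPath y n) : pathWeight r (-y) n = pathWeight (1 - r) y n :=
  prod_congr rfl fun j hj => by
    rcases hy (j + 1) (by simp at hj; omega) with h | h <;> norm_num [h]

lemma pathWeight_update_succ (e : ℝ) :
    pathWeight r (Function.update y (n + 1) e) (n + 1) =
      pathWeight r y n * if e = 1 then r else 1 - r := by
  rw [pathWeight, prod_range_succ, Function.update_self]
  congr 1
  exact prod_congr rfl fun j hj => by rw [Function.update_of_ne (by simp at hj; omega)]

lemma pathWeight_pos (h0 : 0 < r) (h1 : r < 1) : 0 < pathWeight r y n :=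
  prod_pos fun _ _ => by split_ifs <;> linarith

end PathWeight

section Events

variable {Ω : Type*} {Y : ℕ → Ω → ℝ}

def pathEvent (Y : ℕ → Ω → ℝ) (y : ℕ → ℝ) (N : ℕ) : Set Ω := ⋂ j ∈ range (N + 1), Y j ⁻¹' {y j}

def historyEvent (Y : ℕ → Ω → ℝ) (h : ℕ → ℝ) (N : ℕ) : Set Ω :=
  {ω | ∀ i ≤ N, |doubledWalk (fun j => Y j ω) i| = h i}

lemma mem_pathEvent {y : ℕ → ℝ} {N : ℕ} {ω : Ω} :
    ω ∈ pathEvent Y y N ↔ ∀ j ≤ N, Y j ω = y j := by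
  simp [pathEvent]

lemma historyEvent_inter_eq (h : ℕ → ℝ) (N : ℕ) (c : ℝ) :
    historyEvent Y h N ∩ {ω | |doubledWalk (fun j => Y j ω) (N + 1)| = c} =
      historyEvent Y (Function.update h (N + 1) c) (N + 1) := by
  ext ω
  simp only [historyEvent, Set.mem_inter_iff, Set.mem_ofPred_eq]
  constructor
  · rintro ⟨hle, hlast⟩ i hi
    rcases Nat.lt_or_eq_of_le hi with hi | rfl
    · rw [Function.update_of_ne (by omega)]; exact hle i (by omega)
    · rwa [Function.update_self]
  · intro hle
    refine ⟨fun i hi => ?_, by simpa using hle (N + 1) le_rfl⟩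
    simpa [Function.update_of_ne (show i ≠ N + 1 by omega)] using hle i (by omega)

variable [MeasurableSpace Ω] {μ : Measure Ω}

lemma measurableSet_pathEvent (hY : ∀ j, Measurable (Y j)) (y : ℕ → ℝ) (N : ℕ) :
    MeasurableSet (pathEvent Y y N) :=
  Finset.measurableSet_biInter _ fun j _ => hY j (measurableSet_singleton _)

lemma measurableSet_historyEvent (hY : ∀ j, Measurable (Y j)) (h : ℕ → ℝ) (N : ℕ) :
    MeasurableSet (historyEvent Y h N) := by
  have hW : ∀ i, Measurable fun ω => doubledWalk (fun j => Y j ω) i := fun i => by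
    unfold doubledWalk; fun_prop
  simp only [historyEvent, Set.ofPred_forall]
  exact .iInter fun i => .iInter fun _ => measurableSet_eq_fun (hW i).abs measurable_const

lemma ae_eq_one_or_eq_neg_one_of_map_eq_stepDist {X : Ω → ℝ} (hX : Measurable X) {r : ℝ}
    (h : μ.map X = stepDist r) : ∀ᵐ ω ∂μ, X ω = 1 ∨ X ω = -1 :=
  ae_of_ae_map hX.aemeasurable (h ▸ ae_stepDist_eq_one_or_eq_neg_one r)

lemma measure_preimage_singleton_of_map_eq_stepDist {X : Ω → ℝ} (hX : Measurable X) {r x : ℝ}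
    (h : μ.map X = stepDist r) (hx : x = 1 ∨ x = -1) :
    μ (X ⁻¹' {x}) = ENNReal.ofReal (if x = 1 then r else 1 - r) := by
  rw [← Measure.map_apply hX (measurableSet_singleton x), h, stepDist_singleton r hx]

lemma measure_pathEvent (hYmeas : ∀ j, Measurable (Y j)) (hindep : iIndepFun Y μ)
    (hY0 : μ.map (Y 0) = stepDist (1 / 2)) {p : ℝ} (hY : ∀ j, μ.map (Y (j + 1)) = stepDist p)
    (hp0 : 0 ≤ p) (hp1 : p ≤ 1) {y : ℕ → ℝ} {N : ℕ} (hy : IsSignPath y N) :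
    μ (pathEvent Y y N) = ENNReal.ofReal (1 / 2 * pathWeight p y N) := by
  rw [pathEvent, hindep.meas_biInter fun j _ => ⟨{y j}, measurableSet_singleton _, rfl⟩,
    prod_range_succ', measure_preimage_singleton_of_map_eq_stepDist (hYmeas 0) hY0 (hy 0 N.zero_le),
    prod_congr rfl fun j hj => measure_preimage_singleton_of_map_eq_stepDist (hYmeas (j + 1)) (hY j)
      (hy (j + 1) (by simp at hj; omega)),
    ← ENNReal.ofReal_prod_of_nonneg fun j _ => by split_ifs <;> linarith,
    mul_comm, ← ENNReal.ofReal_mul (by split_ifs <;> norm_num), pathWeight]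
  congr 2
  split_ifs <;> norm_num

lemma measure_historyEvent (hYmeas : ∀ j, Measurable (Y j))
    (hsign : ∀ᵐ ω ∂μ, ∀ j, Y j ω = 1 ∨ Y j ω = -1) {y h : ℕ → ℝ} {N : ℕ}
    (hy : IsSignPath y N) (hyh : ∀ i ≤ N, |doubledWalk y i| = h i) :
    μ (historyEvent Y h N) = μ (pathEvent Y y N) + μ (pathEvent Y (-y) N) := by
  have hae : historyEvent Y h N =ᵐ[μ] (pathEvent Y y N ∪ pathEvent Y (-y) N : Set Ω) := by
    refine Filter.eventuallyEq_set.mpr ?_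
    filter_upwards [hsign] with ω hω
    simp only [historyEvent, Set.mem_ofPred_eq, Set.mem_union, mem_pathEvent, Pi.neg_apply]
    constructor
    · intro hωh
      exact eq_or_eq_neg_of_abs_doubledWalk_eq hy (fun j _ => hω j)
        fun i hi => (hωh i hi).trans (hyh i hi).symm
    · rintro (hωy | hωy) i hi
      · rw [doubledWalk_congr fun j hj => hωy j (hj.trans hi), hyh i hi]
      · rw [doubledWalk_congr (z := -y) fun j hj => hωy j (hj.trans hi), doubledWalk_neg, abs_neg,
          hyh i hi]
  have hdisj : Disjoint (pathEvent Y y N) (pathEvent Y (-y) N) := by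
    refine Set.disjoint_left.mpr fun ω h1 h2 => ?_
    have := (mem_pathEvent.mp h1 0 N.zero_le).symm.trans (mem_pathEvent.mp h2 0 N.zero_le)
    rw [Pi.neg_apply] at this
    rcases hy 0 N.zero_le with h | h <;> linarith
  rw [measure_congr hae, measure_union hdisj (measurableSet_pathEvent hYmeas _ _)]

theorem cond_historyEvent_eq (hYmeas : ∀ j, Measurable (Y j)) (hindep : iIndepFun Y μ)
    (hY0 : μ.map (Y 0) = stepDist (1 / 2)) {p : ℝ} (hY : ∀ j, μ.map (Y (j + 1)) = stepDist p)
    (hp0 : 0 < p) (hp1 : p < 1) {y h : ℕ → ℝ} {n : ℕ} (hy : IsSignPath y n)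
    (hyh : ∀ i ≤ n, |doubledWalk y i| = h i) (hyn : doubledWalk y n = h n) :
    cond μ (historyEvent Y h n) {ω | |doubledWalk (fun j => Y j ω) (n + 1)| = h n + 2} =
      ENNReal.ofReal ((pathWeight p y n * p + pathWeight (1 - p) y n * (1 - p)) /
        (pathWeight p y n + pathWeight (1 - p) y n)) := by
  have hsign : ∀ᵐ ω ∂μ, ∀ j, Y j ω = 1 ∨ Y j ω = -1 := by
    refine ae_all_iff.mpr fun j => ?_
    cases j with
    | zero => exact ae_eq_one_or_eq_neg_one_of_map_eq_stepDist (hYmeas 0) hY0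
    | succ j => exact ae_eq_one_or_eq_neg_one_of_map_eq_stepDist (hYmeas (j + 1)) (hY j)
  -- Adding `|V_{n+1}| = h n + 2` to the history is realised by one more step of `y` away from `0`.
  set y' := Function.update y (n + 1) 1
  have hy' : IsSignPath y' (n + 1) := hy.update_succ (.inl rfl)
  have hy'h : ∀ i ≤ n + 1, |doubledWalk y' i| = Function.update h (n + 1) (h n + 2) i := by
    intro i hi
    rcases Nat.lt_or_eq_of_le hi with hi | rfl
    · rw [Function.update_of_ne (by omega), doubledWalk_update_of_le (by omega), hyh i (by omega)]
    · have : 0 ≤ h n := hyh n le_rfl ▸ abs_nonneg _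
      rw [Function.update_self, doubledWalk_update_succ, hyn, abs_of_nonneg (by linarith)]
      ring
  have hμ {z : ℕ → ℝ} {N : ℕ} (hz : IsSignPath z N) :=
    measure_pathEvent hYmeas hindep hY0 hY hp0.le hp1.le hz
  have hq : 0 < 1 - p := sub_pos.mpr hp1
  have hwp : 0 < pathWeight p y n := pathWeight_pos hp0 hp1
  have hwq : 0 < pathWeight (1 - p) y n := pathWeight_pos hq (by linarith)
  rw [cond_apply (measurableSet_historyEvent hYmeas h n), historyEvent_inter_eq,
    measure_historyEvent hYmeas hsign hy hyh, measure_historyEvent hYmeas hsign hy' hy'h,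
    hμ hy, hμ hy', hμ hy.neg, hμ hy'.neg, pathWeight_neg hy, pathWeight_neg hy',
    pathWeight_update_succ, pathWeight_update_succ, if_pos rfl, if_pos rfl,
    ← ENNReal.ofReal_add (by positivity) (by positivity),
    ← ENNReal.ofReal_add (by positivity) (by positivity),
    ← ENNReal.ofReal_inv_of_pos (by positivity), ← ENNReal.ofReal_mul (by positivity)]
  congr 1
  field_simp

end Events

lemma pow_ratio_cancel {p q : ℝ} (hp : 0 < p) (hq : 0 < q) (d m : ℕ) :
    (p ^ (d + m) * q ^ d * p + q ^ (d + m) * p ^ d * q) /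
        (p ^ (d + m) * q ^ d + q ^ (d + m) * p ^ d) =
      (p ^ (m + 1) + q ^ (m + 1)) / (p ^ m + q ^ m) := by
  rw [← mul_div_mul_left (p ^ (m + 1) + q ^ (m + 1)) (p ^ m + q ^ m)
    (by positivity : (p * q) ^ d ≠ 0)]
  congr 1 <;> ring

theorem doubled_walk_conditional_transition_probability_general
    {Ω : Type*} [MeasurableSpace Ω] (μ : Measure Ω)
    (p : ℝ) (hp0 : 0 < p) (hp1 : p < 1)
    (Y : ℕ → Ω → ℝ)
    (hYmeas : ∀ i, Measurable (Y i))
    (hYindep : iIndepFun Y μ)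
    (hY0dist : Measure.map (Y 0) μ = stepDist (1/2))
    (hYdist : ∀ i, Measure.map (Y (i + 1)) μ = stepDist p)
    (n : ℕ) (k : ℕ → ℕ) (hk0 : k 0 = 1)
    (hkstep : ∀ i, i + 1 ≤ n →
      (k i = 1 → (k (i + 1) = 1 ∨ k (i + 1) = 3)) ∧
      (k i ≠ 1 → ((k (i + 1) : ℤ) = (k i : ℤ) - 2 ∨ (k (i + 1) : ℤ) = (k i : ℤ) + 2))) :
    (((k n - 1) / 2) % 2 = n % 2 →
      ProbabilityTheory.cond μ
          {ω | ∀ i, i ≤ n →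
            |Y 0 ω + 2 * ∑ j ∈ Finset.range i, Y (j + 1) ω| = (k i : ℝ)}
          {ω | |Y 0 ω + 2 * ∑ j ∈ Finset.range (n + 1), Y (j + 1) ω| = (k n : ℝ) + 2}
        = ENNReal.ofReal
            ((p ^ ((k n + 1) / 2) + (1 - p) ^ ((k n + 1) / 2))
              / (p ^ ((k n - 1) / 2) + (1 - p) ^ ((k n - 1) / 2)))) ∧
    (((k n - 1) / 2) % 2 ≠ n % 2 →
      ProbabilityTheory.cond μ
          {ω | ∀ i, i ≤ n →
            |Y 0 ω + 2 * ∑ j ∈ Finset.range i, Y (j + 1) ω| = (k i : ℝ)}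
          {ω | |Y 0 ω + 2 * ∑ j ∈ Finset.range (n + 1), Y (j + 1) ω| = (k n : ℝ) + 2}
        = ENNReal.ofReal
            ((p ^ ((k n + 3) / 2) + (1 - p) ^ ((k n + 3) / 2))
              / (p ^ ((k n + 1) / 2) + (1 - p) ^ ((k n + 1) / 2)))) := by
  obtain ⟨y, hy, hyk, hyn⟩ := exists_signPath_doubledWalk_eq hk0 hkstep
  have hcond := cond_historyEvent_eq (h := fun i => (k i : ℝ)) hYmeas hYindep hY0dist hYdist
    hp0 hp1 hy hyk hyn
  rw [pathWeight_eq_pow_mul_pow, pathWeight_eq_pow_mul_pow, sub_sub_cancel] at hcond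
  have hwalk := hyn ▸ doubledWalk_eq_card hy
  have hcard := card_filter_add_card_filter_not (s := range n) fun j => y (j + 1) = 1
  rw [card_range] at hcard
  set u := #{j ∈ range n | y (j + 1) = 1}
  set d := #{j ∈ range n | ¬y (j + 1) = 1}
  rcases hy 0 n.zero_le with h0 | h0 <;> rw [h0] at hwalk
  · replace hwalk : (k n : ℤ) = 1 + 2 * ((u : ℤ) - d) := by exact_mod_cast hwalk
    obtain ⟨m, hm⟩ : ∃ m, u = d + m := ⟨u - d, by omega⟩
    rw [hm, pow_ratio_cancel hp0 (sub_pos.mpr hp1)] at hcond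
    refine ⟨fun _ => ?_, fun _ => by exfalso; omega⟩
    rwa [show (k n + 1) / 2 = m + 1 by omega, show (k n - 1) / 2 = m by omega]
  · replace hwalk : (k n : ℤ) = -1 + 2 * ((u : ℤ) - d) := by exact_mod_cast hwalk
    obtain ⟨m, hm⟩ : ∃ m, u = d + (m + 1) := ⟨u - d - 1, by omega⟩
    rw [hm, pow_ratio_cancel hp0 (sub_pos.mpr hp1)] at hcond
    refine ⟨fun _ => by exfalso; omega, fun _ => ?_⟩
    rwa [show (k n + 3) / 2 = m + 2 by omega, show (k n + 1) / 2 = m + 1 by omega]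

/-- Conditional-probability computation for the walk `V^p_n = X_0 + 2 S^p_n` (modelled by
`Y 0 = X_0 ~ stepDist (1/2)` and increments `Y (i+1) ~ stepDist p`, all independent, so that
`V^p_n = Y 0 + 2 ∑_{1 ≤ i ≤ n} Y i`).  Let `p ∈ (0,1)`, `q = 1 - p`, and let
`k_0, …, k_n` be odd positive integers with `k_0 = 1` and, for each `i < n`,
`k_{i+1} − k_i ∈ {0, 2}` if `k_i = 1`, and `k_{i+1} − k_i ∈ {−2, 2}` otherwise.  Then:
(i) if `(k_n − 1)/2` and `n` have the same parity,
`P(|V_{n+1}| = k_n + 2 ∣ |V_i| = k_i, i = 0,…,n)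
  = (p^{(k_n+1)/2} + q^{(k_n+1)/2})/(p^{(k_n−1)/2} + q^{(k_n−1)/2})`;
(ii) if they have opposite parity, the conditional probability equals
`(p^{(k_n+3)/2} + q^{(k_n+3)/2})/(p^{(k_n+1)/2} + q^{(k_n+1)/2})`.
In particular it depends on the history only through `k_n` and `n`, so `(|V_n|)` is a
(non-homogeneous) Markov chain. -/
theorem doubled_walk_conditional_transition_probability
    {Ω : Type*} [MeasurableSpace Ω] (μ : Measure Ω) [IsProbabilityMeasure μ]
    (p : ℝ) (hp0 : 0 < p) (hp1 : p < 1)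
    (Y : ℕ → Ω → ℝ)
    (hYmeas : ∀ i, Measurable (Y i))
    (hYindep : iIndepFun Y μ)
    (hY0dist : Measure.map (Y 0) μ = stepDist (1/2))
    (hYdist : ∀ i, Measure.map (Y (i + 1)) μ = stepDist p)
    (n : ℕ) (k : ℕ → ℕ) (hk0 : k 0 = 1)
    (hkodd : ∀ i, i ≤ n → Odd (k i)) (hkpos : ∀ i, i ≤ n → 0 < k i)
    (hkstep : ∀ i, i + 1 ≤ n →
      (k i = 1 → (k (i + 1) = 1 ∨ k (i + 1) = 3)) ∧
      (k i ≠ 1 → ((k (i + 1) : ℤ) = (k i : ℤ) - 2 ∨ (k (i + 1) : ℤ) = (k i : ℤ) + 2))) :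
    (((k n - 1) / 2) % 2 = n % 2 →
      ProbabilityTheory.cond μ
          {ω | ∀ i, i ≤ n →
            |Y 0 ω + 2 * ∑ j ∈ Finset.range i, Y (j + 1) ω| = (k i : ℝ)}
          {ω | |Y 0 ω + 2 * ∑ j ∈ Finset.range (n + 1), Y (j + 1) ω| = (k n : ℝ) + 2}
        = ENNReal.ofReal
            ((p ^ ((k n + 1) / 2) + (1 - p) ^ ((k n + 1) / 2))
              / (p ^ ((k n - 1) / 2) + (1 - p) ^ ((k n - 1) / 2)))) ∧
    (((k n - 1) / 2) % 2 ≠ n % 2 →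
      ProbabilityTheory.cond μ
          {ω | ∀ i, i ≤ n →
            |Y 0 ω + 2 * ∑ j ∈ Finset.range i, Y (j + 1) ω| = (k i : ℝ)}
          {ω | |Y 0 ω + 2 * ∑ j ∈ Finset.range (n + 1), Y (j + 1) ω| = (k n : ℝ) + 2}
        = ENNReal.ofReal
            ((p ^ ((k n + 3) / 2) + (1 - p) ^ ((k n + 3) / 2))
              / (p ^ ((k n + 1) / 2) + (1 - p) ^ ((k n + 1) / 2)))) :=
  doubled_walk_conditional_transition_probability_general μ p hp0 hp1 Y hYmeas hYindep hY0dist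
    hYdist n k hk0 hkstep
end
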